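/- Let j, k, n be positive integers with 1 ≤ j ≤ k ≤ n, h = j+k+n+1, and n ≥ ⌊h/2⌋ + 1. Then Mo(P_L(j,k,n)) − Mo(C_L(1,h−2)) = 24·((j+n)(k−1) + kj) > 0. -/

import Mathlib

/-!
Every sum in the cut-method formula for `Mo(P_L(j,k,n))` has a closed form. The sums of
`|h+1-2i|` and `|h-2i|` over `i ≤ n` change sign at `⌈h/2⌉` and `⌊h/2⌋`, both at most `n`, and
besides polynomial terms they contribute the parity-dependent term `12 ⌊h/2⌋ ⌈h/2⌉ - 4 ⌊h/2⌋`
to `Mo(P_L(j,k,n)) / 6`. Since `Mo(C_L(1,h-2))` is six times that term plus `24(h-1)`, the term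
cancels in the difference and a polynomial in `j, k, n` remains.
-/

open Finset

/-- The Mostar index of the tree-like phenylene `P_L(j,k,n)`, via the cut method. -/
def MoPL (j k n : ℕ) : ℤ :=
  let h : ℕ := j + k + n + 1
  6 * (2 * ((j : ℤ) + 1) * ((n : ℤ) - (k : ℤ)) +
       2 * ((k : ℤ) + 1) * ((n : ℤ) - (j : ℤ)) +
       2 * ((n : ℤ) + 1) * ((k : ℤ) - (j : ℤ)) +
       4 * ∑ i ∈ Finset.Icc 1 j, ((h : ℤ) + 1 - 2 * (i : ℤ)) +
       4 * ∑ i ∈ Finset.Icc 1 k, ((h : ℤ) + 1 - 2 * (i : ℤ)) +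
       4 * ∑ i ∈ Finset.Icc 1 n, |(h : ℤ) + 1 - 2 * (i : ℤ)| +
       2 * ∑ i ∈ Finset.Icc 1 j, ((h : ℤ) - 2 * (i : ℤ)) +
       2 * ∑ i ∈ Finset.Icc 1 k, ((h : ℤ) - 2 * (i : ℤ)) +
       2 * ∑ i ∈ Finset.Icc 1 n, |(h : ℤ) - 2 * (i : ℤ)|)

/-- The Mostar index of the phenylene chain `C_L(1, h−2)` (closed form). -/
def MoCL1 (h : ℕ) : ℤ :=
  72 * ((h / 2 : ℕ) : ℤ) * (((h + 1) / 2 : ℕ) : ℤ) - 24 * ((h / 2 : ℕ) : ℤ) +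
    24 * ((h : ℤ) - 1)

theorem sum_Icc_sub_two_mul (c : ℤ) (m : ℕ) :
    ∑ i ∈ Icc 1 m, (c - 2 * (i : ℤ)) = m * c - m * (m + 1) := by
  induction m with
  | zero => simp
  | succ m ih =>
    rw [sum_Icc_succ_top (by omega), ih]
    push_cast
    ring

theorem sum_Icc_abs_sub_two_mul (c n : ℕ) (hn : c / 2 ≤ n) :
    ∑ i ∈ Icc 1 n, |(c : ℤ) - 2 * (i : ℤ)| =
      n * (n + 1) - n * c + 2 * ((c / 2 : ℕ) : ℤ) * (c - (c / 2 : ℕ) - 1) := by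
  induction n, hn using Nat.le_induction with
  | base =>
    rw [sum_congr rfl fun i hi => abs_of_nonneg (by grind), sum_Icc_sub_two_mul]
    ring
  | succ n hn ih =>
    rw [sum_Icc_succ_top (by omega), ih, abs_of_nonpos (by omega)]
    push_cast
    ring

theorem MoPL_sub_MoCL1 {j k n : ℕ} (hn : j + k + 1 ≤ n) :
    MoPL j k n - MoCL1 (j + k + n + 1) =
      24 * (((j : ℤ) + n) * (k - 1) + k * j) := by
  have h_odd := sum_Icc_abs_sub_two_mul (j + k + n + 1 + 1) n (by omega)
  have h_even := sum_Icc_abs_sub_two_mul (j + k + n + 1) n (by omega)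
  have ceil_eq :
      (((j + k + n + 1 + 1) / 2 : ℕ) : ℤ) = j + k + n + 1 - ((j + k + n + 1) / 2 : ℕ) := by
    omega
  rw [Nat.cast_add _ 1, Nat.cast_one] at h_odd
  simp only [MoPL, MoCL1, sum_Icc_sub_two_mul]
  rw [h_odd, h_even]
  simp only [Nat.cast_add, Nat.cast_one, ceil_eq]
  ring

theorem lemma43_case2_general (j k n h : ℕ) (hj : 1 ≤ j) (hjk : j ≤ k)
    (hh : h = j + k + n + 1) (hn : h / 2 + 1 ≤ n) :
    MoPL j k n - MoCL1 h =
      24 * (((j : ℤ) + (n : ℤ)) * ((k : ℤ) - 1) + (k : ℤ) * (j : ℤ)) ∧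
    (0 : ℤ) < 24 * (((j : ℤ) + (n : ℤ)) * ((k : ℤ) - 1) + (k : ℤ) * (j : ℤ)) := by
  subst hh
  refine ⟨MoPL_sub_MoCL1 (by omega), ?_⟩
  have hk : (1 : ℤ) ≤ k := by exact_mod_cast hj.trans hjk
  have : (0 : ℤ) ≤ (j + n) * (k - 1) := by positivity
  have : (0 : ℤ) < k * j := by positivity
  linarith

/-- Case 2 of Lemma 4.3: for `n ≥ ⌊h/2⌋+1`,
`Mo(P_L(j,k,n)) − Mo(C_L(1,h−2)) = 24((j+n)(k−1) + kj) > 0`. -/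
theorem lemma43_case2 (j k n h : ℕ) (hj : 1 ≤ j) (hjk : j ≤ k) (hkn : k ≤ n)
    (hh : h = j + k + n + 1) (hn : h / 2 + 1 ≤ n) :
    MoPL j k n - MoCL1 h =
      24 * (((j : ℤ) + (n : ℤ)) * ((k : ℤ) - 1) + (k : ℤ) * (j : ℤ)) ∧
    (0 : ℤ) < 24 * (((j : ℤ) + (n : ℤ)) * ((k : ℤ) - 1) + (k : ℤ) * (j : ℤ)) :=
  lemma43_case2_general j k n h hj hjk hh hn
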